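/- Let g : Ω → ℝ be a continuous function on a nonempty Polish space Ω. If ∫ g dμ ≥ 0 for every Borel probability measure μ on Ω with full support under which g is integrable, then g(ω) ≥ 0 for all ω ∈ Ω. -/

import Mathlib

/-! If `g ω₀ < 0`, take a full-support probability measure `P` under which `g` is integrable: a
normalized sum of Dirac masses along a dense sequence, with weights `2⁻ⁿ / (1 + |g xₙ|)`. Mixing
`t P + (1 - t) δ_{ω₀}` keeps full support for `t > 0`, and its integral `t ∫ g dP + (1 - t) g ω₀`
is negative for small `t`. -/

open MeasureTheory

variable {Ω : Type*}

/-- A measure has full support: every nonempty open set has positive measure. -/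
def HasFullSupport [TopologicalSpace Ω] [MeasurableSpace Ω] (P : Measure Ω) : Prop :=
  ∀ U : Set Ω, IsOpen U → U.Nonempty → 0 < P U

open Filter Topology Set TopologicalSpace
open scoped ENNReal

section DenseDiracSum

variable {E : Type*} [TopologicalSpace Ω] [MeasurableSpace Ω] [NormedAddCommGroup E]

lemma ENNReal.div_one_add_mul_le (r e : ℝ≥0∞) : r / (1 + e) * e ≤ r := by
  rw [div_eq_mul_inv, mul_right_comm, ← div_eq_mul_inv]
  exact ENNReal.div_le_of_le_mul (by gcongr; exact le_add_self)

theorem exists_isFiniteMeasure_isOpenPosMeasure_integrable [Nonempty Ω] [SeparableSpace Ω]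
    [OpensMeasurableSpace Ω] {f : Ω → E} (hf : StronglyMeasurable f) :
    ∃ ν : Measure Ω, IsFiniteMeasure ν ∧ ν.IsOpenPosMeasure ∧ Integrable f ν := by
  set x := denseSeq Ω
  set w : ℕ → ℝ≥0∞ := fun n => 2⁻¹ ^ n / (1 + ‖f (x n)‖ₑ)
  have hw_le : ∀ n, w n ≤ 2⁻¹ ^ n := fun n =>
    ENNReal.div_le_of_le_mul (le_mul_of_one_le_right' (le_self_add (α := ℝ≥0∞)))
  have hw_pos : ∀ n, w n ≠ 0 := fun n =>
    (ENNReal.div_pos_iff.2 ⟨by simp, by simp⟩).ne'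
  refine ⟨Measure.sum fun n => w n • Measure.dirac (x n), ⟨?_⟩, ⟨fun U hU hne => ?_⟩,
    hf.aestronglyMeasurable, ?_⟩
  · calc Measure.sum (fun n => w n • Measure.dirac (x n)) univ = ∑' n, w n := by simp
      _ ≤ ∑' n, (2⁻¹ : ℝ≥0∞) ^ n := ENNReal.tsum_le_tsum hw_le
      _ < ∞ := by simp
  · obtain ⟨n, hn⟩ := (denseRange_denseSeq Ω).exists_mem_open hU hne
    refine (lt_of_lt_of_le ?_ (Measure.le_sum _ n U)).ne'
    rw [Measure.smul_apply, Measure.dirac_apply_of_mem hn, smul_eq_mul, mul_one]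
    exact (hw_pos n).bot_lt
  · rw [hasFiniteIntegral_iff_enorm, lintegral_sum_measure]
    calc ∑' n, ∫⁻ a, ‖f a‖ₑ ∂(w n • Measure.dirac (x n)) = ∑' n, w n * ‖f (x n)‖ₑ := by
          simp only [lintegral_smul_measure, lintegral_dirac' _ hf.enorm, smul_eq_mul]
      _ ≤ ∑' n, (2⁻¹ : ℝ≥0∞) ^ n := ENNReal.tsum_le_tsum fun n => ENNReal.div_one_add_mul_le _ _
      _ < ∞ := by simp

theorem exists_isProbabilityMeasure_isOpenPosMeasure_integrable [Nonempty Ω] [SeparableSpace Ω]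
    [OpensMeasurableSpace Ω] {f : Ω → E} (hf : StronglyMeasurable f) :
    ∃ P : Measure Ω, IsProbabilityMeasure P ∧ P.IsOpenPosMeasure ∧ Integrable f P := by
  obtain ⟨ν, hν_fin, hν_pos, hfν⟩ := exists_isFiniteMeasure_isOpenPosMeasure_integrable hf
  refine ⟨(ν univ)⁻¹ • ν, inferInstance, Measure.isOpenPosMeasure_smul ν ?_,
    hfν.smul_measure ?_⟩
  · exact ENNReal.inv_ne_zero.2 (measure_ne_top ν univ)
  · exact ENNReal.inv_ne_top.2 (NeZero.ne (ν univ))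

end DenseDiracSum

section Mixture

variable {E : Type*} [MeasurableSpace Ω] [NormedAddCommGroup E] {P Q : Measure Ω} {t : ℝ}

noncomputable def mixture (t : ℝ) (P Q : Measure Ω) : Measure Ω :=
  ENNReal.ofReal t • P + ENNReal.ofReal (1 - t) • Q

lemma isProbabilityMeasure_mixture [IsProbabilityMeasure P] [IsProbabilityMeasure Q]
    (h₀ : 0 ≤ t) (h₁ : t ≤ 1) : IsProbabilityMeasure (mixture t P Q) := by
  constructor
  rw [mixture, Measure.add_apply, Measure.smul_apply, Measure.smul_apply, measure_univ,
    measure_univ, smul_eq_mul, smul_eq_mul, mul_one, mul_one, ← ENNReal.ofReal_add h₀ (by linarith)]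
  simp

lemma isOpenPosMeasure_mixture [TopologicalSpace Ω] [P.IsOpenPosMeasure] (ht : 0 < t) :
    (mixture t P Q).IsOpenPosMeasure := by
  have := Measure.isOpenPosMeasure_smul P (ENNReal.ofReal_pos.2 ht).ne'
  exact (Measure.le_add_right le_rfl).isOpenPosMeasure

lemma integrable_mixture {f : Ω → E} (hP : Integrable f P) (hQ : Integrable f Q) :
    Integrable f (mixture t P Q) :=
  (hP.smul_measure ENNReal.ofReal_ne_top).add_measure (hQ.smul_measure ENNReal.ofReal_ne_top)

lemma integral_mixture [NormedSpace ℝ E] {f : Ω → E} (h₀ : 0 ≤ t) (h₁ : t ≤ 1)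
    (hP : Integrable f P) (hQ : Integrable f Q) :
    ∫ ω, f ω ∂(mixture t P Q) = t • ∫ ω, f ω ∂P + (1 - t) • ∫ ω, f ω ∂Q := by
  rw [mixture, integral_add_measure (hP.smul_measure ENNReal.ofReal_ne_top)
      (hQ.smul_measure ENNReal.ofReal_ne_top), integral_smul_measure, integral_smul_measure,
    ENNReal.toReal_ofReal h₀, ENNReal.toReal_ofReal (sub_nonneg.2 h₁)]

end Mixture

lemma exists_mem_Ioo_mul_add_one_sub_mul_neg {a b : ℝ} (ha : a < 0) :
    ∃ t ∈ Ioo (0 : ℝ) 1, t * b + (1 - t) * a < 0 := by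
  have hlim : Tendsto (fun t : ℝ => t * b + (1 - t) * a) (𝓝[>] 0) (𝓝 a) := by
    have : Continuous fun t : ℝ => t * b + (1 - t) * a := by fun_prop
    simpa using (this.tendsto 0).mono_left nhdsWithin_le_nhds
  exact (Filter.Eventually.and (Ioo_mem_nhdsGT one_pos) (hlim.eventually (gt_mem_nhds ha))).exists

theorem nonneg_of_integral_nonneg_fullSupport_general
    [MetricSpace Ω] [TopologicalSpace.SeparableSpace Ω]
    [MeasurableSpace Ω] [BorelSpace Ω]
    (g : Ω → ℝ) (hg : Continuous g)
    (h : ∀ μ : Measure Ω, IsProbabilityMeasure μ → HasFullSupport μ →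
      Integrable g μ → 0 ≤ ∫ ω, g ω ∂μ) :
    ∀ ω, 0 ≤ g ω := by
  intro ω₀
  by_contra! hneg
  have : Nonempty Ω := ⟨ω₀⟩
  obtain ⟨P, hP, hP_pos, hgP⟩ :=
    exists_isProbabilityMeasure_isOpenPosMeasure_integrable hg.stronglyMeasurable
  obtain ⟨t, ⟨ht₀, ht₁⟩, hneg_mix⟩ :=
    exists_mem_Ioo_mul_add_one_sub_mul_neg (b := ∫ ω, g ω ∂P) hneg
  have hgδ : Integrable g (Measure.dirac ω₀) := integrable_dirac' hg.stronglyMeasurable (by simp)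
  have := isOpenPosMeasure_mixture (P := P) (Q := Measure.dirac ω₀) ht₀
  have hnonneg := h (mixture t P (Measure.dirac ω₀))
    (isProbabilityMeasure_mixture ht₀.le ht₁.le) (fun U hU hne => hU.measure_pos _ hne)
    (integrable_mixture hgP hgδ)
  rw [integral_mixture ht₀.le ht₁.le hgP hgδ, integral_dirac] at hnonneg
  exact hneg_mix.not_ge hnonneg

/-- a continuous function with nonnegative integral under every full support
Borel probability measure making it integrable is pointwise nonnegative. -/
theorem nonneg_of_integral_nonneg_fullSupport
    [MetricSpace Ω] [Nonempty Ω] [TopologicalSpace.SeparableSpace Ω] [CompleteSpace Ω]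
    [MeasurableSpace Ω] [BorelSpace Ω]
    (g : Ω → ℝ) (hg : Continuous g)
    (h : ∀ μ : Measure Ω, IsProbabilityMeasure μ → HasFullSupport μ →
      Integrable g μ → 0 ≤ ∫ ω, g ω ∂μ) :
    ∀ ω, 0 ≤ g ω :=
  nonneg_of_integral_nonneg_fullSupport_general g hg h
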